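/- For n ≡ 1 or 2 (mod 4), a monotone rank-(n-1) partial injection α on {1,...,n} lies in the alternating inverse monoid if and only if its reverse transformation (the unique monotone partial injection with the same domain and image but opposite orientation) also lies in the alternating inverse monoid. -/

import Mathlib

/-- Partial transformations on `Fin n`, represented as `Option`-valued maps. -/
abbrev PT (n : ℕ) := Fin n → Option (Fin n)

/-- Left-to-right composition of partial maps: `x (pcomp f g) = (x f) g`. -/
def pcomp {n : ℕ} (f g : PT n) : PT n := fun x => (f x).bind g

/-- The identity partial map. -/
def pid (n : ℕ) : PT n := fun x => some x

instance PTMonoid (n : ℕ) : Monoid (PT n) where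
  mul := pcomp
  one := pid n
  mul_assoc f g h := funext fun x => by
    show ((f x).bind g).bind h = (f x).bind fun y => (g y).bind h
    cases f x <;> rfl
  one_mul f := rfl
  mul_one f := funext fun x => by
    show (f x).bind (fun y => some y) = f x
    cases f x <;> rfl

/-- `f` is injective on its domain. -/
def pInj {n : ℕ} (f : PT n) : Prop := ∀ x y a, f x = some a → f y = some a → x = y

/-- The domain of a partial map. -/
def pDom {n : ℕ} (f : PT n) : Finset (Fin n) := Finset.univ.filter fun x => (f x).isSome

/-- The image of a partial map. -/
def pIm {n : ℕ} (f : PT n) : Finset (Fin n) := Finset.univ.filter fun b => ∃ x, f x = some b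

/-- The rank of a partial map is the size of its domain. -/
def prank {n : ℕ} (f : PT n) : ℕ := (pDom f).card

/-- Order-preserving partial maps. -/
def orderPres {n : ℕ} (f : PT n) : Prop :=
  ∀ x y a b, f x = some a → f y = some b → x ≤ y → a ≤ b

/-- Order-reversing partial maps. -/
def orderRev {n : ℕ} (f : PT n) : Prop :=
  ∀ x y a b, f x = some a → f y = some b → x ≤ y → b ≤ a

/-- Monotone partial maps. -/
def isMonotonePT {n : ℕ} (f : PT n) : Prop := orderPres f ∨ orderRev f

/-- The permutation `σ` extends the partial map `f`. -/
def extendsTo {n : ℕ} (σ : Equiv.Perm (Fin n)) (f : PT n) : Prop :=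
  ∀ x a, f x = some a → σ x = a

/-- Membership in the alternating inverse monoid `AI_n`: an injective partial map of
rank `≤ n - 2`, or one that extends to an even permutation. -/
def inAI {n : ℕ} (f : PT n) : Prop :=
  pInj f ∧ (prank f + 2 ≤ n ∨
    ∃ σ : Equiv.Perm (Fin n), σ ∈ alternatingGroup (Fin n) ∧ extendsTo σ f)

/-- `AO_n = AI_n ∩ POI_n`. -/
def AO (n : ℕ) : Set (PT n) := {f | orderPres f ∧ inAI f}

/-- `AM_n = AI_n ∩ PMI_n`. -/
def AM (n : ℕ) : Set (PT n) := {f | isMonotonePT f ∧ inAI f}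

/-- Green's `J`-relation relative to a submonoid-like subset `S` (containing the identity):
`a J b` iff each lies in the two-sided principal ideal of the other. -/
def JRelIn {n : ℕ} (S : Set (PT n)) (a b : PT n) : Prop :=
  (∃ u v, u ∈ S ∧ v ∈ S ∧ a = u * b * v) ∧ (∃ u v, u ∈ S ∧ v ∈ S ∧ b = u * a * v)

/-!
If `f` preserves and `g` reverses order, with the same domain and the same image `I`, then
`g = ρ ∘ f` where `ρ` reverses the order of `I` and fixes its complement. Hence `σ ↦ ρ * σ`
carries the permutations extending `f` onto those extending `g`, and parity is preserved because
`ρ` is a product of `⌊|I| / 2⌋` disjoint transpositions, while `|I| = n - 1 ≡ 0, 1 (mod 4)`.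
-/

open Equiv

lemma Fin.revPerm_succ (m : ℕ) :
    (Fin.revPerm : Perm (Fin (m + 1))) =
      finRotate (m + 1) *
        (Fin.revPerm : Perm (Fin m)).extendDomain (finSuccAboveEquiv (Fin.last m)) := by
  ext i
  induction i using Fin.lastCases with
  | last => simp [Perm.extendDomain_apply_not_subtype]
  | cast j =>
    rw [Perm.mul_apply,
      Perm.extendDomain_apply_subtype _ _ (b := j.castSucc) (Fin.castSucc_lt_last j).ne,
      coe_finRotate_of_ne_last]
    · simp [finSuccAboveEquiv_symm_apply_last, finSuccAboveEquiv_apply]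
      omega
    · simp [finSuccAboveEquiv_apply]

lemma Fin.sign_revPerm : ∀ m, Perm.sign (Fin.revPerm : Perm (Fin m)) = (-1) ^ (m / 2)
  | 0 | 1 => rfl
  | m + 2 => by
    rw [Fin.revPerm_succ, map_mul, sign_finRotate, Perm.sign_extendDomain, Fin.revPerm_succ,
      map_mul, sign_finRotate, Perm.sign_extendDomain, Fin.sign_revPerm m, ← mul_assoc,
      ← pow_add, Odd.neg_one_pow ⟨m, by omega⟩, show (m + 2) / 2 = m / 2 + 1 by omega, pow_succ, mul_comm]

section PartialInjections

variable {n : ℕ}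

@[simp]
lemma mem_pDom {f : PT n} {x : Fin n} : x ∈ pDom f ↔ (f x).isSome := by
  simp [pDom]

@[simp]
lemma mem_pIm {f : PT n} {b : Fin n} : b ∈ pIm f ↔ ∃ x, f x = some b := by
  simp [pIm]

lemma pInj.card_pIm {f : PT n} (hf : pInj f) : (pIm f).card = (pDom f).card := by
  refine (Finset.card_bij (fun x hx => (f x).get (mem_pDom.1 hx)) ?_ ?_ ?_).symm
  · exact fun x _ => mem_pIm.2 ⟨x, (Option.some_get _).symm⟩
  · exact fun x _ y _ hxy =>
      hf x y _ (Option.some_get _).symm (by rw [hxy]; exact (Option.some_get _).symm)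
  · intro b hb
    obtain ⟨x, hx⟩ := mem_pIm.1 hb
    exact ⟨x, by simp [hx], by simp [hx]⟩

lemma extendsTo_mul {σ ρ : Perm (Fin n)} {f g : PT n} (hσ : extendsTo σ f)
    (hgf : ∀ x, g x = (f x).map ρ) : extendsTo (ρ * σ) g := by
  intro x a hx
  obtain ⟨b, hb, rfl⟩ := Option.map_eq_some_iff.1 ((hgf x).symm.trans hx)
  rw [Perm.mul_apply, hσ x b hb]

end PartialInjections

section OrderEmbOfFin

variable {n m : ℕ} {f : PT n} {D I : Finset (Fin n)}

lemma exists_apply_orderEmbOfFin_eq_some (hcD : D.card = m) (hdom : pDom f = D) :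
    ∃ F : Fin m → Fin n, ∀ i, f (D.orderEmbOfFin hcD i) = some (F i) :=
  ⟨_, fun i => (Option.some_get (mem_pDom.1 (hdom ▸ D.orderEmbOfFin_mem hcD i))).symm⟩

lemma pInj.injective_of_apply_orderEmbOfFin_eq_some (hf : pInj f) {hcD : D.card = m}
    {F : Fin m → Fin n} (hF : ∀ i, f (D.orderEmbOfFin hcD i) = some (F i)) :
    Function.Injective F :=
  fun i j hij => (D.orderEmbOfFin hcD).injective (hf _ _ _ (hF i) (hij ▸ hF j))

lemma orderPres.apply_orderEmbOfFin (hp : orderPres f) (hf : pInj f) (hcD : D.card = m)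
    (hcI : I.card = m) (hdom : pDom f = D) (him : pIm f = I) (i : Fin m) :
    f (D.orderEmbOfFin hcD i) = some (I.orderEmbOfFin hcI i) := by
  obtain ⟨F, hF⟩ := exists_apply_orderEmbOfFin_eq_some hcD hdom
  have hmono : StrictMono F :=
    Monotone.strictMono_of_injective
      (fun i j hij => hp _ _ _ _ (hF i) (hF j) ((D.orderEmbOfFin hcD).monotone hij))
      (hf.injective_of_apply_orderEmbOfFin_eq_some hF)
  rw [hF i, Finset.orderEmbOfFin_unique hcI (fun j => him ▸ mem_pIm.2 ⟨_, hF j⟩) hmono]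

lemma orderRev.apply_orderEmbOfFin (hr : orderRev f) (hf : pInj f) (hcD : D.card = m)
    (hcI : I.card = m) (hdom : pDom f = D) (him : pIm f = I) (i : Fin m) :
    f (D.orderEmbOfFin hcD i) = some (I.orderEmbOfFin hcI i.rev) := by
  obtain ⟨F, hF⟩ := exists_apply_orderEmbOfFin_eq_some hcD hdom
  have hanti : StrictAnti F :=
    Antitone.strictAnti_of_injective
      (fun i j hij => hr _ _ _ _ (hF i) (hF j) ((D.orderEmbOfFin hcD).monotone hij))
      (hf.injective_of_apply_orderEmbOfFin_eq_some hF)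
  have hrev : F ∘ Fin.rev = I.orderEmbOfFin hcI :=
    Finset.orderEmbOfFin_unique hcI (fun j => him ▸ mem_pIm.2 ⟨_, hF _⟩)
      (hanti.comp Fin.rev_strictAnti)
  rw [hF i, ← hrev, Function.comp_apply, Fin.rev_rev]

end OrderEmbOfFin

def revOn {n : ℕ} (I : Finset (Fin n)) : Perm (Fin n) :=
  (Fin.revPerm : Perm (Fin I.card)).extendDomain (I.orderIsoOfFin rfl).toEquiv

lemma revOn_orderEmbOfFin {n m : ℕ} {I : Finset (Fin n)} (hcI : I.card = m) (i : Fin m) :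
    revOn I (I.orderEmbOfFin hcI i) = I.orderEmbOfFin hcI i.rev := by
  subst hcI
  have h := Perm.extendDomain_apply_image Fin.revPerm (I.orderIsoOfFin rfl).toEquiv i
  simpa [revOn, Finset.coe_orderIsoOfFin_apply] using h

lemma sign_revOn {n : ℕ} (I : Finset (Fin n)) : Perm.sign (revOn I) = (-1) ^ (I.card / 2) := by
  rw [revOn, Perm.sign_extendDomain, Fin.sign_revPerm]

lemma apply_eq_map_revOn {n : ℕ} {f g : PT n} (hf : pInj f) (hg : pInj g) (hpf : orderPres f)
    (hrg : orderRev g) (hdom : pDom g = pDom f) (him : pIm g = pIm f) (x : Fin n) :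
    g x = (f x).map (revOn (pIm f)) := by
  by_cases hx : x ∈ pDom f
  · obtain ⟨i, rfl⟩ : x ∈ Set.range ((pDom f).orderEmbOfFin hf.card_pIm.symm) := by
      rwa [Finset.range_orderEmbOfFin]
    rw [hpf.apply_orderEmbOfFin hf _ rfl rfl rfl, hrg.apply_orderEmbOfFin hg _ rfl hdom him,
      Option.map_some, revOn_orderEmbOfFin]
  · have hgx : x ∉ pDom g := hdom ▸ hx
    simp only [mem_pDom, Option.not_isSome_iff_eq_none] at hx hgx
    rw [hx, hgx, Option.map_none]

theorem exists_even_extendsTo_iff_of_orderPres_of_orderRev {n : ℕ} {f g : PT n} (hf : pInj f)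
    (hg : pInj g) (hpf : orderPres f) (hrg : orderRev g) (hdom : pDom g = pDom f)
    (him : pIm g = pIm f) (hcard : (pIm f).card % 4 = 0 ∨ (pIm f).card % 4 = 1) :
    (∃ σ ∈ alternatingGroup (Fin n), extendsTo σ f) ↔
      (∃ σ ∈ alternatingGroup (Fin n), extendsTo σ g) := by
  set ρ := revOn (pIm f)
  have hρ : ρ ∈ alternatingGroup (Fin n) := by
    rw [Perm.mem_alternatingGroup, sign_revOn]
    exact Even.neg_one_pow (Nat.even_iff.2 (by omega))
  have hgf : ∀ x, g x = (f x).map ρ := apply_eq_map_revOn hf hg hpf hrg hdom him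
  have hfg : ∀ x, f x = (g x).map (ρ⁻¹ : Perm (Fin n)) := fun x => by
    rw [hgf, Option.map_map, ← Perm.coe_mul, inv_mul_cancel, Perm.coe_one, Option.map_id, id]
  constructor
  · rintro ⟨σ, hσ, hext⟩
    exact ⟨ρ * σ, mul_mem hρ hσ, extendsTo_mul hext hgf⟩
  · rintro ⟨σ, hσ, hext⟩
    exact ⟨ρ⁻¹ * σ, mul_mem (inv_mem hρ) hσ, extendsTo_mul hext hfg⟩

theorem stmt8_general {n : ℕ} (h4 : n % 4 = 1 ∨ n % 4 = 2)
    (f g : PT n) (hf : pInj f) (hg : pInj g)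
    (hmf : isMonotonePT f) (hmg : isMonotonePT g)
    (d : Fin n) (hdf : pDom f = Finset.univ.erase d)
    (hdg : pDom g = pDom f) (him : pIm g = pIm f)
    (hor : orderPres g ↔ ¬ orderPres f) :
    inAI f ↔ inAI g := by
  have hrank : prank f = n - 1 := by simp [prank, hdf]
  have hcard : (pIm f).card % 4 = 0 ∨ (pIm f).card % 4 = 1 := by
    rw [hf.card_pIm, ← prank, hrank]
    omega
  have hext : (∃ σ ∈ alternatingGroup (Fin n), extendsTo σ f) ↔
      (∃ σ ∈ alternatingGroup (Fin n), extendsTo σ g) := by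
    by_cases hpf : orderPres f
    · exact exists_even_extendsTo_iff_of_orderPres_of_orderRev hf hg hpf
        (hmg.resolve_left fun hpg => hor.1 hpg hpf) hdg him hcard
    · refine (exists_even_extendsTo_iff_of_orderPres_of_orderRev hg hf (hor.2 hpf)
        (hmf.resolve_left hpf) hdg.symm him.symm ?_).symm
      rwa [him]
  have hrankg : prank g = n - 1 := by rw [prank, hdg, ← prank, hrank]
  simp only [inAI, hrank, hrankg, hf, hg, true_and]
  rw [or_iff_right (by omega), or_iff_right (by omega), hext]

/-- for `n ≡ 1, 2 (mod 4)`, a monotone rank-`n-1` partial injection lies in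
`AI_n` iff its reverse transformation does. -/
theorem stmt8 {n : ℕ} (hn : 2 ≤ n) (h4 : n % 4 = 1 ∨ n % 4 = 2)
    (f g : PT n) (hf : pInj f) (hg : pInj g)
    (hmf : isMonotonePT f) (hmg : isMonotonePT g)
    (d : Fin n) (hdf : pDom f = Finset.univ.erase d)
    (hdg : pDom g = pDom f) (him : pIm g = pIm f)
    (hor : orderPres g ↔ ¬ orderPres f) :
    inAI f ↔ inAI g :=
  stmt8_general h4 f g hf hg hmf hmg d hdf hdg him hor
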